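/- arXiv:2005.11860 — 3 statements merged into one kernel-verified Lean document; each statement's English description precedes it below -/
import Mathlib

section
/- For fixed x ∈ (1,2), the map Pe ↦ T_Pe(x) = (e^{Pe(x−1)} − 1)/(e^{Pe} − 1) is strictly decreasing in Pe on (0,∞). -/
/-!
With `a = x - 1 ∈ (0, 1)`, the derivative of `P ↦ (exp (P a) - 1) / (exp P - 1)` has numerator
`a exp (P a) (exp P - 1) - (exp (P a) - 1) exp P`, and after multiplying out this is negative
exactly when `exp ((1 - a) P) < (1 - a) exp P + a`, which is strict convexity of `exp` between
`0` and `P`.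
-/

open Real Set

lemma exp_mul_lt_mul_exp_add {b P : ℝ} (hb0 : 0 < b) (hb1 : b < 1) (hP : P ≠ 0) :
    exp (b * P) < b * exp P + (1 - b) := by
  have h := strictConvexOn_exp.2 (mem_univ P) (mem_univ 0) hP hb0 (by linarith : 0 < 1 - b)
    (by ring)
  simpa using h

lemma exp_sub_one_pos {P : ℝ} (hP : 0 < P) : 0 < exp P - 1 := by
  linarith [one_lt_exp_iff.2 hP]

lemma hasDerivAt_exp_mul_sub_one_div_exp_sub_one (a : ℝ) {P : ℝ} (hP : exp P - 1 ≠ 0) :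
    HasDerivAt (fun P => (exp (P * a) - 1) / (exp P - 1))
      ((exp (P * a) * a * (exp P - 1) - (exp (P * a) - 1) * exp P) / (exp P - 1) ^ 2) P := by
  have hnum : HasDerivAt (fun P => exp (P * a) - 1) (exp (P * a) * a) P := by
    simpa using ((hasDerivAt_id P).mul_const a).exp.sub_const 1
  exact hnum.div ((hasDerivAt_exp P).sub_const 1) hP

lemma exp_mul_mul_exp_sub_one_lt {a P : ℝ} (ha0 : 0 < a) (ha1 : a < 1) (hP : 0 < P) :
    exp (P * a) * a * (exp P - 1) < (exp (P * a) - 1) * exp P := by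
  have hconv := exp_mul_lt_mul_exp_add (b := 1 - a) (by linarith) (by linarith) hP.ne'
  have hsplit : exp ((1 - a) * P) * exp (P * a) = exp P := by
    rw [← exp_add]; ring_nf
  have := mul_lt_mul_of_pos_right hconv (exp_pos (P * a))
  nlinarith [exp_pos P]

theorem strictAntiOn_exp_mul_sub_one_div_exp_sub_one {a : ℝ} (ha0 : 0 < a) (ha1 : a < 1) :
    StrictAntiOn (fun P => (exp (P * a) - 1) / (exp P - 1)) (Ioi 0) := by
  have hderiv (P : ℝ) (hP : P ∈ Ioi 0) := hasDerivAt_exp_mul_sub_one_div_exp_sub_one a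
    (exp_sub_one_pos hP).ne'
  refine strictAntiOn_of_deriv_neg (convex_Ioi 0)
    (fun P hP => (hderiv P hP).continuousAt.continuousWithinAt) fun P hP => ?_
  rw [interior_Ioi] at hP
  rw [(hderiv P hP).deriv]
  exact div_neg_of_neg_of_pos (sub_neg.2 (exp_mul_mul_exp_sub_one_lt ha0 ha1 hP))
    (pow_pos (exp_sub_one_pos hP) 2)

theorem stmt_6 (x : ℝ) (hx : x ∈ Set.Ioo (1:ℝ) 2) :
    StrictAntiOn (fun Pe : ℝ => (Real.exp (Pe * (x - 1)) - 1) / (Real.exp Pe - 1))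
      (Set.Ioi (0:ℝ)) :=
  strictAntiOn_exp_mul_sub_one_div_exp_sub_one (by linarith [hx.1]) (by linarith [hx.2])
end

section
/- For Pe > 0 and ε ∈ (0,1), the point x_ε where T_Pe(x_ε) = ε satisfies 2 − x_ε ≤ (1/Pe)·log(1/ε) + o(1/Pe) as Pe → ∞; more precisely, Pe·(2 − x_ε) → log(1/ε). -/
theorem stmt_18 (ε : ℝ) (hε : ε ∈ Set.Ioo (0:ℝ) 1)
    (xε : ℝ → ℝ)
    (hx : ∀ Pe : ℝ, 0 < Pe → xε Pe ∈ Set.Ioo (1:ℝ) 2 ∧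
      (Real.exp (Pe * (xε Pe - 1)) - 1) / (Real.exp Pe - 1) = ε) :
    Filter.Tendsto (fun Pe : ℝ => Pe * (2 - xε Pe)) Filter.atTop (nhds (-Real.log ε)) := by
  obtain ⟨hε0, hε1⟩ := hε
  have hmain : Filter.Tendsto (fun Pe : ℝ => -Real.log (ε + (1 - ε) * Real.exp (-Pe)))
      Filter.atTop (nhds (-Real.log ε)) := by
    have h1 : Filter.Tendsto (fun Pe : ℝ => ε + (1 - ε) * Real.exp (-Pe)) Filter.atTop (nhds ε) := by
      have := ((Real.tendsto_exp_atBot.comp Filter.tendsto_neg_atTop_atBot).const_mul (1 - ε))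
      simpa using (tendsto_const_nhds.add this)
    have h2 : Filter.Tendsto Real.log (nhds ε) (nhds (Real.log ε)) :=
      (Real.continuousAt_log (ne_of_gt hε0)).tendsto
    exact (h2.comp h1).neg
  refine hmain.congr' ?_
  filter_upwards [Filter.eventually_gt_atTop 0] with Pe hPe
  obtain ⟨⟨hx1, hx2⟩, heq⟩ := hx Pe hPe
  have hexp : Real.exp Pe - 1 > 0 := by
    have := Real.add_one_lt_exp (ne_of_gt hPe)
    linarith
  rw [div_eq_iff (ne_of_gt hexp)] at heq
  have heq' : Real.exp (Pe * (xε Pe - 1)) = 1 + ε * (Real.exp Pe - 1) := by linarith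
  have key : ε + (1 - ε) * Real.exp (-Pe) = Real.exp (-(Pe * (2 - xε Pe))) := by
    have h3 : Real.exp (-(Pe * (2 - xε Pe))) = Real.exp (-Pe) * Real.exp (Pe * (xε Pe - 1)) := by
      rw [← Real.exp_add]; ring_nf
    have h0 : Real.exp (-Pe) * Real.exp Pe = 1 := by
      rw [← Real.exp_add]; simp
    rw [h3, heq']
    nlinarith [h0]
  rw [key, Real.log_exp, neg_neg]
end

section
/- The sup-norm distance between the exact solution and the linear interpolant satisfies sup_{x∈[1,2]} |T_Pe(x) − (x−1)| → 1 as Pe → ∞. -/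
theorem stmt_19 :
    Filter.Tendsto
      (fun Pe : ℝ => ⨆ x : Set.Icc (1:ℝ) 2,
        |(Real.exp (Pe * ((x:ℝ) - 1)) - 1) / (Real.exp Pe - 1) - ((x:ℝ) - 1)|)
      Filter.atTop (nhds 1) := by
  haveI : Nonempty (Set.Icc (1:ℝ) 2) := ⟨⟨1, by norm_num⟩⟩
  rw [Metric.tendsto_atTop]
  intro ε hε
  have hmin : 0 < min ε 1 := lt_min hε one_pos
  set δ : ℝ := min ε 1 / 4 with hδdef
  have hδ0 : 0 < δ := by positivity
  have hδle : δ ≤ 1/4 := by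
    have : min ε 1 ≤ 1 := min_le_right _ _
    simp only [hδdef]; linarith
  refine ⟨max 1 (Real.log (2/δ) / δ), fun Pe hPe => ?_⟩
  have hPe1 : (1:ℝ) ≤ Pe := le_trans (le_max_left _ _) hPe
  have hPe0 : 0 < Pe := by linarith
  have hlog : Real.log (2/δ) / δ ≤ Pe := le_trans (le_max_right _ _) hPe
  have hE2 : (2:ℝ) ≤ Real.exp Pe := by
    have h1 : (2:ℝ) ≤ Real.exp 1 := by
      have := Real.add_one_le_exp 1; linarith
    exact le_trans h1 (Real.exp_le_exp.mpr hPe1)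
  have hE : 0 < Real.exp Pe - 1 := by linarith
  set F : Set.Icc (1:ℝ) 2 → ℝ := fun x =>
    |(Real.exp (Pe * ((x:ℝ) - 1)) - 1) / (Real.exp Pe - 1) - ((x:ℝ) - 1)| with hF
  have hbdd : ∀ x : Set.Icc (1:ℝ) 2, F x ≤ 1 := by
    intro ⟨x, hx1, hx2⟩
    set t : ℝ := x - 1 with ht
    have ht0 : 0 ≤ t := by simp [ht]; linarith
    have ht1 : t ≤ 1 := by simp [ht]; linarith
    have hnum0 : 0 ≤ Real.exp (Pe * t) - 1 := by
      have : (1:ℝ) ≤ Real.exp (Pe * t) := Real.one_le_exp (by positivity)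
      linarith
    have hnum1 : Real.exp (Pe * t) - 1 ≤ Real.exp Pe - 1 := by
      have : Real.exp (Pe * t) ≤ Real.exp Pe := by
        apply Real.exp_le_exp.mpr
        nlinarith
      linarith
    have hT0 : 0 ≤ (Real.exp (Pe * t) - 1) / (Real.exp Pe - 1) := by positivity
    have hT1 : (Real.exp (Pe * t) - 1) / (Real.exp Pe - 1) ≤ 1 :=
      (div_le_one hE).mpr hnum1
    simp only [hF]
    rw [abs_le]
    constructor <;> simp only [← ht] <;> [linarith; linarith]
  have hBdd : BddAbove (Set.range F) := ⟨1, by rintro _ ⟨x, rfl⟩; exact hbdd x⟩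
  have hsup_le : (⨆ x, F x) ≤ 1 := ciSup_le hbdd
  -- lower bound via x₀ = 2 - δ
  have hx0 : (2 - δ) ∈ Set.Icc (1:ℝ) 2 := ⟨by linarith, by linarith⟩
  set x₀ : Set.Icc (1:ℝ) 2 := ⟨2 - δ, hx0⟩ with hx₀
  have hT0bound : (Real.exp (Pe * ((x₀:ℝ) - 1)) - 1) / (Real.exp Pe - 1) ≤ δ := by
    have hcoe : (x₀:ℝ) - 1 = 1 - δ := by simp [hx₀]; ring
    rw [hcoe]
    have hexpδ : Real.exp (-(Pe * δ)) ≤ δ / 2 := by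
      have h2δ : (0:ℝ) < 2/δ := by positivity
      have hPeδ : Real.log (2/δ) ≤ Pe * δ := by
        rw [div_le_iff₀ hδ0] at hlog; linarith
      have : 2/δ ≤ Real.exp (Pe * δ) := by
        calc 2/δ = Real.exp (Real.log (2/δ)) := (Real.exp_log h2δ).symm
        _ ≤ Real.exp (Pe * δ) := Real.exp_le_exp.mpr hPeδ
      rw [Real.exp_neg]
      rw [inv_le_comm₀ (Real.exp_pos _) (by positivity : (0:ℝ) < δ/2)]
      calc (δ/2)⁻¹ = 2/δ := by rw [inv_div]
      _ ≤ Real.exp (Pe * δ) := this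
    have hsplit : Real.exp (Pe * (1 - δ)) = Real.exp Pe * Real.exp (-(Pe * δ)) := by
      rw [← Real.exp_add]; ring_nf
    have hnum : Real.exp (Pe * (1 - δ)) - 1 ≤ Real.exp Pe * (δ/2) := by
      have : Real.exp Pe * Real.exp (-(Pe * δ)) ≤ Real.exp Pe * (δ/2) := by
        apply mul_le_mul_of_nonneg_left hexpδ (Real.exp_pos _).le
      rw [hsplit]; linarith
    rw [div_le_iff₀ hE]
    have hEhalf : Real.exp Pe / 2 ≤ Real.exp Pe - 1 := by linarith
    calc Real.exp (Pe * (1 - δ)) - 1 ≤ Real.exp Pe * (δ/2) := hnum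
    _ = δ * (Real.exp Pe / 2) := by ring
    _ ≤ δ * (Real.exp Pe - 1) := by
        apply mul_le_mul_of_nonneg_left hEhalf hδ0.le
  have hFx₀ : 1 - 2*δ ≤ F x₀ := by
    have hcoe : (x₀:ℝ) - 1 = 1 - δ := by simp [hx₀]; ring
    have : ((x₀:ℝ) - 1) - (Real.exp (Pe * ((x₀:ℝ) - 1)) - 1) / (Real.exp Pe - 1) ≤ F x₀ := by
      rw [hF]
      calc _ ≤ |((x₀:ℝ) - 1) - (Real.exp (Pe * ((x₀:ℝ) - 1)) - 1) / (Real.exp Pe - 1)| :=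
            le_abs_self _
      _ = _ := abs_sub_comm _ _
    rw [hcoe] at this hT0bound
    linarith
  have hsup_ge : 1 - 2*δ ≤ ⨆ x, F x := le_trans hFx₀ (le_ciSup hBdd x₀)
  have hdist : dist (⨆ x, F x) 1 ≤ 2*δ := by
    rw [Real.dist_eq, abs_of_nonpos (by linarith)]
    linarith
  calc dist (⨆ x : Set.Icc (1:ℝ) 2,
        |(Real.exp (Pe * ((x:ℝ) - 1)) - 1) / (Real.exp Pe - 1) - ((x:ℝ) - 1)|) 1
      = dist (⨆ x, F x) 1 := rfl
  _ ≤ 2*δ := hdist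
  _ = min ε 1 / 2 := by rw [hδdef]; ring
  _ < ε := by
      have : min ε 1 ≤ ε := min_le_left _ _
      linarith
end
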